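/- For an autonomous evolutionary system E, the weak global attractor A_w and the weak pullback attractor A_w(t) both exist and A_w = A_w(t) for every t ∈ ℝ. Moreover, the strong global attractor A_s exists if and only if the strong pullback attractor A_s(t) exists, in which case A_s = A_s(t) for every t. -/

import Mathlib

open Filter Topology MeasureTheory

variable {X : Type*}

/-- Convergence of a sequence with respect to a distance function `d`. -/
def Conv (d : X → X → ℝ) (u : ℕ → X) (x : X) : Prop :=
  ∀ ε > 0, ∃ N, ∀ n ≥ N, d (u n) x < ε

/-- The `d`-distance between two paired sequences tends to zero. -/
def DistTendsZero (d : X → X → ℝ) (u v : ℕ → X) : Prop :=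
  ∀ ε > 0, ∃ N, ∀ n ≥ N, d (u n) (v n) < ε

/-- Sequential closure of a set with respect to the distance `d`. -/
def SeqClosure (d : X → X → ℝ) (A : Set X) : Set X :=
  {x | ∃ u : ℕ → X, (∀ n, u n ∈ A) ∧ Conv d u x}

/-- Sequential closedness with respect to the distance `d`. -/
def SeqClosed (d : X → X → ℝ) (A : Set X) : Prop :=
  SeqClosure d A ⊆ A

/-- Sequential compactness of a set with respect to the distance `d`. -/
def SeqCompactIn (d : X → X → ℝ) (A : Set X) : Prop :=
  ∀ u : ℕ → X, (∀ n, u n ∈ A) →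
    ∃ x ∈ A, ∃ φ : ℕ → ℕ, StrictMono φ ∧ Conv d (u ∘ φ) x

/-- `d` is a metric on `X`. -/
def IsMetric (d : X → X → ℝ) : Prop :=
  (∀ x y, 0 ≤ d x y) ∧ (∀ x y, d x y = 0 ↔ x = y) ∧ (∀ x y, d x y = d y x) ∧
  (∀ x y z, d x z ≤ d x y + d y z)

/-- Uniform convergence of trajectories on each compact subinterval `[s,T]`,
i.e. convergence in `C([s,∞);X)` with distance `d` on `X`. -/
def ConvTraj (d : X → X → ℝ) (s : ℝ) (u : ℕ → ℝ → X) (v : ℝ → X) : Prop :=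
  ∀ T : ℝ, ∀ ε > 0, ∃ N, ∀ n ≥ N, ∀ r ∈ Set.Icc s T, d (u n r) (v r) < ε

/-- A generalized evolutionary system: to each interval `[s,∞)` it assigns a
nonempty set of trajectories (encoded as functions `ℝ → X`, only the values on
`[s,∞)` being relevant), closed under restriction to later starting times. -/
structure GES (X : Type*) where
  traj : ℝ → Set (ℝ → X)
  nonempty : ∀ s : ℝ, (traj s).Nonempty
  mono : ∀ ⦃s s' : ℝ⦄, s ≤ s' → traj s ⊆ traj s'

namespace GES

variable (E : GES X)

/-- Complete trajectories: those whose restriction to every `[T,∞)` is a trajectory. -/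
def complete : Set (ℝ → X) := {u | ∀ T : ℝ, u ∈ E.traj T}

/-- `P(t,s)A = {u(t) : u ∈ E([s,∞)), u(s) ∈ A}`. -/
def P (t s : ℝ) (A : Set X) : Set X :=
  {x | ∃ u ∈ E.traj s, u s ∈ A ∧ u t = x}

/-- `P̃(t,s)A = {u(t) : u ∈ E((-∞,∞)), u(s) ∈ A}`. -/
def Ptil (t s : ℝ) (A : Set X) : Set X :=
  {x | ∃ u ∈ E.complete, u s ∈ A ∧ u t = x}

/-- The pullback omega-limit `Ω_d(A,t) = ⋂_{s≤t} cl_d(⋃_{r≤s} P(t,r)A)`. -/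
def Omega (d : X → X → ℝ) (A : Set X) (t : ℝ) : Set X :=
  ⋂ s ∈ Set.Iic t, SeqClosure d (⋃ r ∈ Set.Iic s, E.P t r A)

/-- The family `Afam` pullback attracts the set `B` in the metric `d`. -/
def PullbackAttracts (d : X → X → ℝ) (Afam : ℝ → Set X) (B : Set X) : Prop :=
  ∀ t : ℝ, ∀ ε > 0, ∃ s0 ≤ t, ∀ s ≤ s0, ∀ x ∈ E.P t s B, ∃ a ∈ Afam t, d x a < ε

/-- The `d`-pullback attractor: a family of `d`-closed, `d`-pullback attracting
sets which is minimal with respect to these properties. -/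
def IsPullbackAttractor (d : X → X → ℝ) (Afam : ℝ → Set X) : Prop :=
  (∀ t, SeqClosed d (Afam t)) ∧ E.PullbackAttracts d Afam Set.univ ∧
  ∀ B : ℝ → Set X, (∀ t, SeqClosed d (B t)) → E.PullbackAttracts d B Set.univ →
    ∀ t, Afam t ⊆ B t

/-- Pullback asymptotic compactness with respect to `d`. -/
def PullbackAsympCompact (d : X → X → ℝ) : Prop :=
  ∀ t : ℝ, ∀ s : ℕ → ℝ, (∀ n, s n ≤ t) → Tendsto s atTop atBot →
    ∀ x : ℕ → X, (∀ n, x n ∈ E.P t (s n) Set.univ) →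
      ∃ y : X, ∃ φ : ℕ → ℕ, StrictMono φ ∧ Conv d (x ∘ φ) y

/-- Pullback semi-invariance. -/
def PBSemiInv (B : ℝ → Set X) : Prop :=
  ∀ ⦃s t : ℝ⦄, s ≤ t → E.Ptil t s (B s) ⊆ B t

/-- Pullback invariance. -/
def PBInv (B : ℝ → Set X) : Prop :=
  ∀ ⦃s t : ℝ⦄, s ≤ t → E.Ptil t s (B s) = B t

/-- Pullback quasi-invariance. -/
def PBQuasiInv (B : ℝ → Set X) : Prop :=
  ∀ t : ℝ, ∀ b ∈ B t, ∃ u ∈ E.complete, u t = b ∧ ∀ s ≤ t, u s ∈ B s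

/-- Condition A1: `E([s,∞))` is compact in `C([s,∞);X_w)` for each `s`. -/
def A1 (d : X → X → ℝ) : Prop :=
  ∀ s : ℝ, ∀ u : ℕ → ℝ → X, (∀ n, u n ∈ E.traj s) →
    ∃ v ∈ E.traj s, ∃ φ : ℕ → ℕ, StrictMono φ ∧ ConvTraj d s (fun n => u (φ n)) v

end GES

/-- The system is autonomous (time-shift property of the trajectory spaces). -/
def Autonomous {X : Type*} (E : GES X) : Prop :=
  ∀ τ s : ℝ, ∀ u : ℝ → X, u ∈ E.traj (τ + s) ↔ (fun r => u (r + s)) ∈ E.traj τ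

/-- `Aset` `d`-attracts every subset of `X` forward in time:
for all `B ⊆ X` and `ε>0` there is `t0` with `R(t)B ⊆ B_d(Aset,ε)` for `t ≥ t0`,
where `R(t)B = P(t,0)B`. -/
def AttractsAll {X : Type*} (E : GES X) (d : X → X → ℝ) (Aset : Set X) : Prop :=
  ∀ B : Set X, ∀ ε > (0 : ℝ), ∃ t0 : ℝ, ∀ t ≥ t0, ∀ x ∈ E.P t 0 B,
    ∃ a ∈ Aset, d x a < ε

/-- The `d`-global attractor: a minimal `d`-closed `d`-attracting set. -/
def IsGlobalAttractor {X : Type*} (E : GES X) (d : X → X → ℝ) (Aset : Set X) : Prop :=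
  SeqClosed d Aset ∧ AttractsAll E d Aset ∧
  ∀ B : Set X, SeqClosed d B → AttractsAll E d B → Aset ⊆ B

/-! For an autonomous system `P(t,s)A = R(t-s)A`, so the pullback ω-limit `Ω_d(X,t)` is the
forward ω-limit `ω_d(X)` at every time, and a constant family pullback attracts iff its value
attracts forward in time. Hence every value of a pullback attractor is a global attractor, and a
global attractor, taken as a constant family, is the pullback attractor. Weak compactness of `X`
makes `ω_w(X)` the weak global attractor. -/

section SeqClosure

variable {d : X → X → ℝ}

lemma exists_one_div_succ_lt {ε : ℝ} (hε : 0 < ε) : ∃ N : ℕ, ∀ n ≥ N, 1 / ((n : ℝ) + 1) < ε := by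
  obtain ⟨N, hN⟩ := exists_nat_one_div_lt hε
  refine ⟨N, fun n hn => lt_of_le_of_lt ?_ hN⟩
  gcongr

lemma seqClosure_mono {A B : Set X} (h : A ⊆ B) : SeqClosure d A ⊆ SeqClosure d B :=
  fun _ ⟨u, hu, hc⟩ => ⟨u, fun n => h (hu n), hc⟩

lemma seqClosed_seqClosure (hd : IsMetric d) (A : Set X) : SeqClosed d (SeqClosure d A) := by
  rintro x ⟨u, hu, hc⟩
  have hw : ∀ n : ℕ, ∃ w ∈ A, d w (u n) < 1 / ((n : ℝ) + 1) := fun n => by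
    obtain ⟨v, hv, hvc⟩ := hu n
    obtain ⟨N, hN⟩ := hvc (1 / ((n : ℝ) + 1)) (by positivity)
    exact ⟨v N, hv N, hN N le_rfl⟩
  choose w hwA hwu using hw
  refine ⟨w, hwA, fun ε hε => ?_⟩
  obtain ⟨N₁, hN₁⟩ := exists_one_div_succ_lt (half_pos hε)
  obtain ⟨N₂, hN₂⟩ := hc (ε / 2) (half_pos hε)
  refine ⟨max N₁ N₂, fun n hn => ?_⟩
  calc d (w n) x ≤ d (w n) (u n) + d (u n) x := hd.2.2.2 _ _ _
    _ < ε / 2 + ε / 2 :=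
      add_lt_add ((hwu n).trans (hN₁ n (le_of_max_le_left hn))) (hN₂ n (le_of_max_le_right hn))
    _ = ε := add_halves ε

lemma seqClosed_iInter {ι : Sort*} {A : ι → Set X} (h : ∀ i, SeqClosed d (A i)) :
    SeqClosed d (⋂ i, A i) :=
  fun _ ⟨u, hu, hc⟩ => Set.mem_iInter.2 fun i => h i ⟨u, fun n => Set.mem_iInter.1 (hu n) i, hc⟩

lemma SeqClosed.mem_of_forall_dist_lt (hd : IsMetric d) {B : Set X} (hB : SeqClosed d B) {y : X}
    (h : ∀ ε > 0, ∃ a ∈ B, d y a < ε) : y ∈ B := by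
  choose a haB hya using fun n : ℕ => h (1 / ((n : ℝ) + 1)) (by positivity)
  refine hB ⟨a, haB, fun ε hε => (exists_one_div_succ_lt hε).imp fun N hN n hn => ?_⟩
  exact hd.2.2.1 y (a n) ▸ (hya n).trans (hN n hn)

end SeqClosure

namespace GES

variable (E : GES X) {d : X → X → ℝ}

/-- The forward ω-limit `ω_d(A)`; `P τ 0` is the paper's `R(τ)`. -/
def omegaLimit (d : X → X → ℝ) (A : Set X) : Set X :=
  ⋂ T : ℝ, SeqClosure d (⋃ τ ∈ Set.Ici T, E.P τ 0 A)

lemma P_mono {A B : Set X} (h : A ⊆ B) (t s : ℝ) : E.P t s A ⊆ E.P t s B :=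
  fun _ ⟨u, hu, huA, hut⟩ => ⟨u, hu, h huA, hut⟩

lemma P_eq_P_sub_zero (hauto : Autonomous E) (t s : ℝ) (A : Set X) :
    E.P t s A = E.P (t - s) 0 A := by
  ext x
  constructor
  · rintro ⟨u, hu, huA, rfl⟩
    refine ⟨fun r => u (r + s), (hauto 0 s u).1 (by rwa [zero_add]), by simpa using huA, ?_⟩
    simp
  · rintro ⟨v, hv, hvA, rfl⟩
    refine ⟨fun r => v (r - s), ?_, by simpa using hvA, rfl⟩
    have := (hauto 0 s fun r => v (r - s)).2 (by simpa using hv)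
    rwa [zero_add] at this

lemma biUnion_P_Iic (hauto : Autonomous E) (t s : ℝ) (A : Set X) :
    ⋃ r ∈ Set.Iic s, E.P t r A = ⋃ τ ∈ Set.Ici (t - s), E.P τ 0 A := by
  ext x
  simp only [Set.mem_iUnion, E.P_eq_P_sub_zero hauto t, exists_prop, Set.mem_Iic, Set.mem_Ici]
  constructor
  · rintro ⟨r, hr, hx⟩
    exact ⟨t - r, by linarith, hx⟩
  · rintro ⟨τ, hτ, hx⟩
    exact ⟨t - τ, by linarith, by rwa [sub_sub_cancel]⟩

lemma Omega_eq_omegaLimit (hauto : Autonomous E) (d : X → X → ℝ) (A : Set X) (t : ℝ) :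
    E.Omega d A t = E.omegaLimit d A := by
  simp only [Omega, omegaLimit, E.biUnion_P_Iic hauto]
  ext y
  simp only [Set.mem_iInter, Set.mem_Iic]
  refine ⟨fun h T => ?_, fun h s _ => h (t - s)⟩
  refine seqClosure_mono (Set.biUnion_subset_biUnion_left ?_) (h (min t (t - T)) (min_le_left _ _))
  exact Set.Ici_subset_Ici.2 (by linarith [min_le_right t (t - T)])

lemma seqClosed_omegaLimit (hd : IsMetric d) (A : Set X) : SeqClosed d (E.omegaLimit d A) :=
  seqClosed_iInter fun _ => seqClosed_seqClosure hd _

lemma attractsAll_omegaLimit (hcompact : SeqCompactIn d Set.univ) :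
    AttractsAll E d (E.omegaLimit d Set.univ) := by
  intro B ε hε
  by_contra! hfar
  choose τ hτ x hx hxfar using fun n : ℕ => hfar n
  obtain ⟨y, -, φ, hφ, hconv⟩ := hcompact x fun _ => Set.mem_univ _
  have hy : y ∈ E.omegaLimit d Set.univ := by
    refine Set.mem_iInter.2 fun T => ?_
    obtain ⟨N, hN⟩ := exists_nat_ge T
    have hτ_ge (n : ℕ) : T ≤ τ (φ (n + N)) := by
      have : (N : ℝ) ≤ φ (n + N) := by exact_mod_cast (Nat.le_add_left N n).trans hφ.le_apply
      linarith [hτ (φ (n + N))]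
    refine ⟨fun n => x (φ (n + N)),
      fun n => Set.mem_biUnion (hτ_ge n) (E.P_mono (Set.subset_univ B) _ _ (hx _)), ?_⟩
    exact fun δ hδ => (hconv δ hδ).imp fun M hM n hn => hM (n + N) (by omega)
  obtain ⟨M, hM⟩ := hconv ε hε
  exact (hM M le_rfl).not_ge (hxfar (φ M) y hy)

lemma omegaLimit_subset_of_attractsAll (hd : IsMetric d) {B : Set X} (hB : SeqClosed d B)
    (hattr : AttractsAll E d B) : E.omegaLimit d Set.univ ⊆ B := by
  intro y hy
  refine hB.mem_of_forall_dist_lt hd fun ε hε => ?_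
  obtain ⟨T, hT⟩ := hattr Set.univ (ε / 2) (half_pos hε)
  obtain ⟨u, hu, hc⟩ := Set.mem_iInter.1 hy T
  obtain ⟨N, hN⟩ := hc (ε / 2) (half_pos hε)
  obtain ⟨τ, hτ, huN⟩ := Set.mem_iUnion₂.1 (hu N)
  obtain ⟨a, haB, hda⟩ := hT τ hτ (u N) huN
  refine ⟨a, haB, ?_⟩
  calc d y a ≤ d (u N) y + d (u N) a := hd.2.2.1 (u N) y ▸ hd.2.2.2 _ _ _
    _ < ε / 2 + ε / 2 := add_lt_add (hN N le_rfl) hda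
    _ = ε := add_halves ε

lemma isGlobalAttractor_omegaLimit (hd : IsMetric d) (hcompact : SeqCompactIn d Set.univ) :
    IsGlobalAttractor E d (E.omegaLimit d Set.univ) :=
  ⟨E.seqClosed_omegaLimit hd _, E.attractsAll_omegaLimit hcompact,
    fun _ hB hattr => E.omegaLimit_subset_of_attractsAll hd hB hattr⟩

variable {E}

lemma pullbackAttracts_const (hauto : Autonomous E) {A : Set X} (hA : AttractsAll E d A) :
    E.PullbackAttracts d (fun _ => A) Set.univ := by
  intro t ε hε
  obtain ⟨T, hT⟩ := hA Set.univ ε hε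
  refine ⟨min t (t - T), min_le_left _ _, fun s hs x hx => ?_⟩
  rw [E.P_eq_P_sub_zero hauto] at hx
  exact hT (t - s) (by linarith [min_le_right t (t - T)]) x hx

lemma PullbackAttracts.attractsAll (hauto : Autonomous E) {Afam : ℝ → Set X}
    (h : E.PullbackAttracts d Afam Set.univ) (t : ℝ) : AttractsAll E d (Afam t) := by
  intro B ε hε
  obtain ⟨s₀, -, hs₀⟩ := h t ε hε
  refine ⟨t - s₀, fun τ hτ x hx => hs₀ (t - τ) (by linarith) x ?_⟩
  rw [E.P_eq_P_sub_zero hauto, sub_sub_cancel]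
  exact E.P_mono (Set.subset_univ B) _ _ hx

lemma IsPullbackAttractor.isGlobalAttractor (hauto : Autonomous E) {Afam : ℝ → Set X}
    (h : E.IsPullbackAttractor d Afam) (t : ℝ) : IsGlobalAttractor E d (Afam t) :=
  ⟨h.1 t, h.2.1.attractsAll hauto t,
    fun _ hB hattr => h.2.2 _ (fun _ => hB) (pullbackAttracts_const hauto hattr) t⟩

end GES

section GlobalAttractor

variable {E : GES X} {d : X → X → ℝ}

lemma IsGlobalAttractor.unique {A B : Set X} (hA : IsGlobalAttractor E d A)
    (hB : IsGlobalAttractor E d B) : A = B :=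
  (hA.2.2 B hB.1 hB.2.1).antisymm (hB.2.2 A hA.1 hA.2.1)

lemma IsGlobalAttractor.isPullbackAttractor_const (hauto : Autonomous E) {A : Set X}
    (hA : IsGlobalAttractor E d A) : E.IsPullbackAttractor d (fun _ => A) :=
  ⟨fun _ => hA.1, GES.pullbackAttracts_const hauto hA.2.1,
    fun _ hB hattr t => hA.2.2 _ (hB t) (hattr.attractsAll hauto t)⟩

end GlobalAttractor

theorem stmt19_general {X : Type*} (E : GES X) (ds dw : X → X → ℝ)
    (hdw : IsMetric dw)
    (hcompact : SeqCompactIn dw (Set.univ : Set X))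
    (hauto : Autonomous E) :
    (∃ Aw : Set X, IsGlobalAttractor E dw Aw) ∧
    E.IsPullbackAttractor dw (fun t => E.Omega dw Set.univ t) ∧
    (∀ Aw : Set X, IsGlobalAttractor E dw Aw → ∀ t : ℝ, Aw = E.Omega dw Set.univ t) ∧
    ((∃ As : Set X, IsGlobalAttractor E ds As) ↔
      (∃ Afam : ℝ → Set X, E.IsPullbackAttractor ds Afam)) ∧
    (∀ (As : Set X) (Afam : ℝ → Set X), IsGlobalAttractor E ds As →
      E.IsPullbackAttractor ds Afam → ∀ t : ℝ, As = Afam t) := by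
  have hω := E.isGlobalAttractor_omegaLimit hdw hcompact
  have hΩ : (fun t => E.Omega dw Set.univ t) = fun _ => E.omegaLimit dw Set.univ :=
    funext (E.Omega_eq_omegaLimit hauto dw Set.univ)
  refine ⟨⟨_, hω⟩, hΩ ▸ hω.isPullbackAttractor_const hauto, fun Aw hAw t => ?_,
    ⟨fun ⟨_, hAs⟩ => ⟨_, hAs.isPullbackAttractor_const hauto⟩,
      fun ⟨_, hAfam⟩ => ⟨_, hAfam.isGlobalAttractor hauto 0⟩⟩,
    fun _ _ hAs hAfam t => hAs.unique (hAfam.isGlobalAttractor hauto t)⟩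
  rw [E.Omega_eq_omegaLimit hauto]
  exact hAw.unique hω

/-- for an autonomous evolutionary system the weak global
attractor and the weak pullback attractor both exist and coincide at every
time; and the strong global attractor exists iff the strong pullback attractor
exists, in which case they coincide at every time. -/
theorem stmt19 {X : Type*} (E : GES X) (ds dw : X → X → ℝ)
    (hds : IsMetric ds) (hdw : IsMetric dw)
    (hcompact : SeqCompactIn dw (Set.univ : Set X))
    (H : ∀ u v : ℕ → X, DistTendsZero ds u v → DistTendsZero dw u v)
    (hauto : Autonomous E) :
    (∃ Aw : Set X, IsGlobalAttractor E dw Aw) ∧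
    E.IsPullbackAttractor dw (fun t => E.Omega dw Set.univ t) ∧
    (∀ Aw : Set X, IsGlobalAttractor E dw Aw → ∀ t : ℝ, Aw = E.Omega dw Set.univ t) ∧
    ((∃ As : Set X, IsGlobalAttractor E ds As) ↔
      (∃ Afam : ℝ → Set X, E.IsPullbackAttractor ds Afam)) ∧
    (∀ (As : Set X) (Afam : ℝ → Set X), IsGlobalAttractor E ds As →
      E.IsPullbackAttractor ds Afam → ∀ t : ℝ, As = Afam t) :=
  stmt19_general E ds dw hdw hcompact hauto
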